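/- Let g be a solution of the Ricci flow on Ω × [0,T) and let ε, δ > 0. At every point of Ω × (0,T) where K := R + ε/(2(t+δ)) > 0, the Levi-Civita Christoffel symbols of the space-time metric g̃_{ε,δ} are: (1) Γ̃^k_{ij} = Γ^k_{ij} for 1 ≤ i,j,k ≤ n; (2) Γ̃^0_{ij} = R_{ij}/K for 1 ≤ i,j ≤ n; (3) Γ̃^k_{i0} = Γ̃^k_{0i} = −R^k_i for 1 ≤ i,k ≤ n; (4) Γ̃^k_{00} = −½ g^{kl}∂_l R for 1 ≤ k ≤ n; (5) Γ̃^0_{i0} = Γ̃^0_{0i} = ∂_i R/(2K) for 1 ≤ i ≤ n; (6) Γ̃^0_{00} = ( ½ ∂R/∂t − ε/(4(t+δ)²) )/K. -/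

import Mathlib

/- Common local-coordinate framework for the Chow–Chu space-time
   interpretation of Hamilton's Harnack inequality for the Ricci flow. -/

noncomputable section
open scoped BigOperators
open Filter

namespace CC

/-- A time-dependent scalar field on `ℝⁿ × ℝ` (space variable first, then time). -/
abbrev Fld (n : ℕ) := (Fin n → ℝ) → ℝ → ℝ

/-- A time-dependent 2-tensor field (e.g. a metric) in local coordinates. -/
abbrev Met (n : ℕ) := Fin n → Fin n → Fld n

variable {n : ℕ}

/-- Spatial partial derivative `∂ᵢ` of a time-dependent scalar field. -/
def spd (i : Fin n) (u : Fld n) : Fld n :=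
  fun x t => fderiv ℝ (fun y => u y t) x (Pi.single i 1)

/-- Time partial derivative `∂/∂t` of a time-dependent scalar field. -/
def tpd (u : Fld n) : Fld n :=
  fun x t => deriv (fun s => u x s) t

/-- Christoffel symbols `Γ^k_{ij} = ½ g^{kl}(∂ᵢ g_{jl} + ∂ⱼ g_{il} − ∂ₗ g_{ij})`. -/
def Gamma (g ginv : Met n) (k i j : Fin n) : Fld n :=
  fun x t => (1/2) * ∑ l, ginv k l x t *
    (spd i (g j l) x t + spd j (g i l) x t - spd l (g i j) x t)

/-- Riemann curvature `R^l_{ijk} = ∂ᵢΓ^l_{jk} − ∂ⱼΓ^l_{ik} + Γ^m_{jk}Γ^l_{im} − Γ^m_{ik}Γ^l_{jm}`. -/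
def Riem (g ginv : Met n) (l i j k : Fin n) : Fld n :=
  fun x t => spd i (Gamma g ginv l j k) x t - spd j (Gamma g ginv l i k) x t
    + ∑ m, (Gamma g ginv m j k x t * Gamma g ginv l i m x t
          - Gamma g ginv m i k x t * Gamma g ginv l j m x t)

/-- Ricci curvature `R_{jk} = R^p_{pjk}`. -/
def Ric (g ginv : Met n) (j k : Fin n) : Fld n :=
  fun x t => ∑ p, Riem g ginv p p j k x t

/-- Scalar curvature `R = g^{jk} R_{jk}`. -/
def Scal (g ginv : Met n) : Fld n :=
  fun x t => ∑ j, ∑ k, ginv j k x t * Ric g ginv j k x t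

/-- Ricci curvature with raised index, `R^k_i = g^{km} R_{im}`. -/
def RicUp (g ginv : Met n) (k i : Fin n) : Fld n :=
  fun x t => ∑ m, ginv k m x t * Ric g ginv i m x t

/-- Fully lowered Riemann tensor `R_{ijkl} = g_{lm} R^m_{ijk}`. -/
def RiemLow (g ginv : Met n) (i j k l : Fin n) : Fld n :=
  fun x t => ∑ m, g l m x t * Riem g ginv m i j k x t

/-- Covariant derivative of a 1-form: `∇ᵢω_j = ∂ᵢω_j − Γ^p_{ij} ω_p`. -/
def cd1 (g ginv : Met n) (i : Fin n) (ω : Fin n → Fld n) (j : Fin n) : Fld n :=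
  fun x t => spd i (ω j) x t - ∑ p, Gamma g ginv p i j x t * ω p x t

/-- Covariant derivative of a (0,2)-tensor. -/
def cd2 (g ginv : Met n) (i : Fin n) (A : Fin n → Fin n → Fld n) (j k : Fin n) : Fld n :=
  fun x t => spd i (A j k) x t - ∑ p, Gamma g ginv p i j x t * A p k x t
    - ∑ p, Gamma g ginv p i k x t * A j p x t

/-- Covariant derivative of a (1,1)-tensor `T^l_j`:
`∇_a T^l_j = ∂_a T^l_j + Γ^l_{ap} T^p_j − Γ^p_{aj} T^l_p`. -/
def cd11 (g ginv : Met n) (a : Fin n) (T : Fin n → Fin n → Fld n) (l j : Fin n) : Fld n :=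
  fun x t => spd a (T l j) x t + ∑ p, Gamma g ginv l a p x t * T p j x t
    - ∑ p, Gamma g ginv p a j x t * T l p x t

/-- Covariant derivative of a vector field: `∇ᵢV^l = ∂ᵢV^l + Γ^l_{ip} V^p`. -/
def cdVec (g ginv : Met n) (i : Fin n) (V : Fin n → Fld n) (l : Fin n) : Fld n :=
  fun x t => spd i (V l) x t + ∑ p, Gamma g ginv l i p x t * V p x t

/-- Hessian of a scalar: `∇ᵢ∇ⱼu = ∂ᵢ∂ⱼu − Γ^p_{ij}∂_p u`. -/
def hess (g ginv : Met n) (u : Fld n) (i j : Fin n) : Fld n :=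
  fun x t => spd i (spd j u) x t - ∑ p, Gamma g ginv p i j x t * spd p u x t

/-- Gradient (raised differential) of the scalar curvature: `∇^l R = g^{lm}∂_m R`. -/
def gradScal (g ginv : Met n) (l : Fin n) : Fld n :=
  fun x t => ∑ m, ginv l m x t * spd m (Scal g ginv) x t

/-- Rough Laplacian `Δ = g^{pq}∇_p∇_q` on 1-forms. -/
def lap1 (g ginv : Met n) (V : Fin n → Fld n) (j : Fin n) : Fld n :=
  fun x t => ∑ p, ∑ q, ginv p q x t *
    (spd p (cd1 g ginv q V j) x t
     - ∑ m, Gamma g ginv m p q x t * cd1 g ginv m V j x t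
     - ∑ m, Gamma g ginv m p j x t * cd1 g ginv q V m x t)

/-- Rough Laplacian `Δ = g^{pq}∇_p∇_q` on (0,2)-tensors. -/
def lap02 (g ginv : Met n) (A : Fin n → Fin n → Fld n) (i j : Fin n) : Fld n :=
  fun x t => ∑ p, ∑ q, ginv p q x t *
    (spd p (cd2 g ginv q A i j) x t
     - ∑ m, Gamma g ginv m p q x t * cd2 g ginv m A i j x t
     - ∑ m, Gamma g ginv m p i x t * cd2 g ginv q A m j x t
     - ∑ m, Gamma g ginv m p j x t * cd2 g ginv q A i m x t)

/-- Rough Laplacian `Δ = g^{pq}∇_p∇_q` on (1,1)-tensors. -/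
def lap11 (g ginv : Met n) (T : Fin n → Fin n → Fld n) (l i : Fin n) : Fld n :=
  fun x t => ∑ p, ∑ q, ginv p q x t *
    (spd p (cd11 g ginv q T l i) x t
     + ∑ m, Gamma g ginv l p m x t * cd11 g ginv q T m i x t
     - ∑ m, Gamma g ginv m p q x t * cd11 g ginv m T l i x t
     - ∑ m, Gamma g ginv m p i x t * cd11 g ginv q T l m x t)

/-- Laplacian of the scalar curvature `ΔR = g^{ij}(∂ᵢ∂ⱼR − Γ^p_{ij}∂_pR)`. -/
def lapScal (g ginv : Met n) : Fld n :=
  fun x t => ∑ i, ∑ j, ginv i j x t * hess g ginv (Scal g ginv) i j x t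

/-- Squared norm of the Ricci tensor `|Ric|² = g^{ik}g^{jl}R_{ij}R_{kl}`. -/
def normRicSq (g ginv : Met n) : Fld n :=
  fun x t => ∑ i, ∑ j, ∑ k, ∑ l,
    ginv i k x t * ginv j l x t * Ric g ginv i j x t * Ric g ginv k l x t

/-- Hamilton's tensor `P_{ijk} = ∇ᵢR_{jk} − ∇ⱼR_{ik}`. -/
def Pt (g ginv : Met n) (i j k : Fin n) : Fld n :=
  fun x t => cd2 g ginv i (Ric g ginv) j k x t - cd2 g ginv j (Ric g ginv) i k x t

/-- Hamilton's tensor `M_{ij} = ΔR_{ij} − ½∇ᵢ∇ⱼR + 2R_{kijl}R_{kl} − R_{ik}R_{kj}`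
(repeated lower indices contracted with `g^{··}`). -/
def Mt (g ginv : Met n) (i j : Fin n) : Fld n :=
  fun x t => lap02 g ginv (Ric g ginv) i j x t
    - (1/2) * hess g ginv (Scal g ginv) i j x t
    + 2 * ∑ k, ∑ l, ∑ a, ∑ b, ginv k a x t * ginv l b x t *
        RiemLow g ginv k i j l x t * Ric g ginv a b x t
    - ∑ k, ∑ a, ginv k a x t * Ric g ginv i k x t * Ric g ginv a j x t

/-- Hamilton's Harnack quadratic
`Z(U,W) = M_{ij}W_iW_j − 2P_{ijk}U_{ij}W_k + R_{ijkl}U_{ij}U_{lk}`,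
repeated lower indices being contracted with `g^{··}`. -/
def Zharnack (g ginv : Met n) (U : Fin n → Fin n → ℝ) (W : Fin n → ℝ) : Fld n :=
  fun x t =>
    (∑ i, ∑ j, ∑ p, ∑ q, ginv i p x t * ginv j q x t * Mt g ginv i j x t * W p * W q)
    - 2 * (∑ i, ∑ j, ∑ k, ∑ p, ∑ q, ∑ r,
        ginv i p x t * ginv j q x t * ginv k r x t * Pt g ginv i j k x t * U p q * W r)
    + (∑ i, ∑ j, ∑ k, ∑ l, ∑ p, ∑ q, ∑ r, ∑ s,
        ginv i p x t * ginv j q x t * ginv k r x t * ginv l s x t *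
          RiemLow g ginv i j k l x t * U p q * U s r)

/-- `g` (with pointwise inverse `ginv`) is a smooth solution of the Ricci flow
`∂g_{ij}/∂t = −2R_{ij}` on `Ω × [0,T)`. -/
def RicciFlow (Ωs : Set (Fin n → ℝ)) (T : ℝ) (g ginv : Met n) : Prop :=
  IsOpen Ωs ∧ IsConnected Ωs ∧ 0 < T ∧
  (∀ i j, ContDiffOn ℝ (⊤ : ℕ∞) (fun p : (Fin n → ℝ) × ℝ => g i j p.1 p.2)
      (Ωs ×ˢ Set.Ico 0 T)) ∧
  (∀ x ∈ Ωs, ∀ t ∈ Set.Ico (0:ℝ) T,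
    (∀ i j, g i j x t = g j i x t) ∧
    (∀ v : Fin n → ℝ, v ≠ 0 → 0 < ∑ i, ∑ j, g i j x t * v i * v j) ∧
    (∀ i j, ∑ k, g i k x t * ginv k j x t = (if i = j then (1:ℝ) else 0)) ∧
    (∀ i j, tpd (g i j) x t = -2 * Ric g ginv i j x t))

/-! ### Space-time objects -/

/-- A space-time connection on `M̃ = Ω × [0,T)`: the index `0` is time,
the index `i.succ` is the spatial direction `i`. -/
abbrev Con (n : ℕ) := Fin (n+1) → Fin (n+1) → Fin (n+1) → Fld n

/-- Space-time partial derivative: `∂₀ = ∂/∂t` and `∂_{i.succ} = ∂ᵢ`. -/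
def spdT (i : Fin (n+1)) (u : Fld n) : Fld n :=
  Fin.cases (tpd u) (fun j => spd j u) i

/-- Curvature of a space-time connection:
`R̃^l_{ijk} = ∂ᵢΓ̃^l_{jk} − ∂ⱼΓ̃^l_{ik} + Σ_m (Γ̃^m_{jk}Γ̃^l_{im} − Γ̃^m_{ik}Γ̃^l_{jm})`. -/
def RiemT (Γ : Con n) (l i j k : Fin (n+1)) : Fld n :=
  fun x t => spdT i (Γ l j k) x t - spdT j (Γ l i k) x t
    + ∑ m : Fin (n+1), (Γ m j k x t * Γ l i m x t - Γ m i k x t * Γ l j m x t)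

/-- Ricci tensor of a space-time connection: `R̃_{jk} = Σ_p R̃^p_{pjk}`. -/
def RicT (Γ : Con n) (j k : Fin (n+1)) : Fld n :=
  fun x t => ∑ p : Fin (n+1), RiemT Γ p p j k x t

/-- Space-time covariant derivative of a (0,2)-tensor with respect to a connection. -/
def cdT2 (Γ : Con n) (a : Fin (n+1)) (A : Fin (n+1) → Fin (n+1) → Fld n)
    (b c : Fin (n+1)) : Fld n :=
  fun x t => spdT a (A b c) x t - ∑ p : Fin (n+1), Γ p a b x t * A p c x t
    - ∑ p : Fin (n+1), Γ p a c x t * A b p x t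

/-- Space-time covariant derivative of a (1,1)-tensor with respect to a connection. -/
def cdT11 (Γ : Con n) (a : Fin (n+1)) (T : Fin (n+1) → Fin (n+1) → Fld n)
    (l j : Fin (n+1)) : Fld n :=
  fun x t => spdT a (T l j) x t + ∑ p : Fin (n+1), Γ l a p x t * T p j x t
    - ∑ p : Fin (n+1), Γ p a j x t * T l p x t

/-- Time shift of a field by `τ`. -/
def shift (τ : ℝ) (u : Fld n) : Fld n := fun x t => u x (t + τ)

/-- The degenerate inverse metric on space-time (no time shift):
`g̃^{ij} = g^{ij}` for spatial `i,j` and `g̃^{ij} = 0` if `i = 0` or `j = 0`. -/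
def gdegM (ginv : Met n) (i j : Fin (n+1)) : Fld n :=
  Fin.cases (fun _ _ => (0:ℝ))
    (fun i' => Fin.cases (fun _ _ => (0:ℝ)) (fun j' => ginv i' j') j) i

/-- The degenerate inverse metric `g̃_τ` on `M̃_τ`, shifted in time by `τ`. -/
def gdeg (ginv : Met n) (τ : ℝ) (i j : Fin (n+1)) : Fld n :=
  shift τ (gdegM ginv i j)

/-- The Chow–Chu connection `Γ̃_τ` on space-time, defined by (A1)–(A4)
(with time shift `τ`). -/
def GammaA (g ginv : Met n) (τ : ℝ) : Con n :=
  fun k i j =>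
    Fin.cases (fun _ _ => (0:ℝ))
      (fun k' =>
        Fin.cases
          (Fin.cases
            (shift τ (fun x t => -(1/2) * ∑ m, ginv k' m x t * spd m (Scal g ginv) x t))
            (fun j' => shift τ (fun x t => -(RicUp g ginv k' j' x t))) j)
          (fun i' =>
            Fin.cases (shift τ (fun x t => -(RicUp g ginv k' i' x t)))
              (fun j' => shift τ (Gamma g ginv k' i' j')) j) i) k

/-! ### The modified flow -/

/-- `∇ᵢ∇^k f = g^{km} ∇ᵢ∇ₘ f`. -/
def hessUp (g ginv : Met n) (f : Fld n) (i k : Fin n) : Fld n :=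
  fun x t => ∑ m, ginv k m x t * hess g ginv f i m x t

/-- `∇^p f = g^{pq} ∂_q f`. -/
def gradf (ginv : Met n) (f : Fld n) (p : Fin n) : Fld n :=
  fun x t => ∑ q, ginv p q x t * spd q f x t

/-- The potential `−½R + ∂f/∂t − ½|∇f|²`. -/
def Fpot (g ginv : Met n) (f : Fld n) : Fld n :=
  fun x t => -(1/2) * Scal g ginv x t + tpd f x t
    - (1/2) * ∑ p, ∑ q, ginv p q x t * spd p f x t * spd q f x t

/-- The space-time connection `Γ̃` of the modified flow, defined by (D1)–(D4). -/
def GammaD (g ginv : Met n) (f : Fld n) : Con n :=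
  fun k i j =>
    Fin.cases (fun _ _ => (0:ℝ))
      (fun k' =>
        Fin.cases
          (Fin.cases
            (fun x t => ∑ l, ginv k' l x t * spd l (Fpot g ginv f) x t)
            (fun j' => fun x t => -(RicUp g ginv k' j' x t) + hessUp g ginv f j' k' x t) j)
          (fun i' =>
            Fin.cases
              (fun x t => -(RicUp g ginv k' i' x t) + hessUp g ginv f i' k' x t)
              (fun j' => Gamma g ginv k' i' j') j) i) k

/-- Space-time Hessian `∇̃_a∇̃_b f = ∂_a∂_b f − Σ_p Γ̃^p_{ab} ∂_p f` (with `∂₀ = ∂/∂t`). -/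
def hessT (Γ : Con n) (f : Fld n) (a b : Fin (n+1)) : Fld n :=
  fun x t => spdT a (spdT b f) x t - ∑ p : Fin (n+1), Γ p a b x t * spdT p f x t

/-- Space-time Ricci tensor with first index raised by the degenerate metric:
`R̃^k_i = Σ_{p=1}^n g^{kp} R̃_{pi}` for spatial `k`, and `R̃^0_i = 0`. -/
def ricTup (ginv : Met n) (Γ : Con n) (k i : Fin (n+1)) : Fld n :=
  Fin.cases (fun _ _ => (0:ℝ))
    (fun k' => fun x t => ∑ p, ginv k' p x t * RicT Γ p.succ i x t) k

/-- `g` is a smooth solution of the modified Ricci flow with potential `f`: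
`∂g_{ij}/∂t = −2R_{ij} + 2∇ᵢ∇ⱼf` on `Ω × [0,T)`. -/
def ModifiedRicciFlow (Ωs : Set (Fin n → ℝ)) (T : ℝ) (g ginv : Met n) (f : Fld n) : Prop :=
  IsOpen Ωs ∧ IsConnected Ωs ∧ 0 < T ∧
  (∀ i j, ContDiffOn ℝ (⊤ : ℕ∞) (fun p : (Fin n → ℝ) × ℝ => g i j p.1 p.2)
      (Ωs ×ˢ Set.Ico 0 T)) ∧
  ContDiffOn ℝ (⊤ : ℕ∞) (fun p : (Fin n → ℝ) × ℝ => f p.1 p.2) (Ωs ×ˢ Set.Ico 0 T) ∧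
  (∀ x ∈ Ωs, ∀ t ∈ Set.Ico (0:ℝ) T,
    (∀ i j, g i j x t = g j i x t) ∧
    (∀ v : Fin n → ℝ, v ≠ 0 → 0 < ∑ i, ∑ j, g i j x t * v i * v j) ∧
    (∀ i j, ∑ k, g i k x t * ginv k j x t = (if i = j then (1:ℝ) else 0)) ∧
    (∀ i j, tpd (g i j) x t = -2 * Ric g ginv i j x t + 2 * hess g ginv f i j x t))

/-! ### The approximating metrics `g̃_{ε,δ}` -/

/-- The space-time metric `g̃_{ε,δ}`: spatial part `g`, `g̃_{00} = R + ε/(2(t+δ))`,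
mixed components zero. -/
def gE (g ginv : Met n) (ε δ : ℝ) (i j : Fin (n+1)) : Fld n :=
  Fin.cases
    (Fin.cases (fun x t => Scal g ginv x t + ε / (2 * (t + δ)))
      (fun _ => fun _ _ => (0:ℝ)) j)
    (fun i' => Fin.cases (fun _ _ => (0:ℝ)) (fun j' => g i' j') j) i

/-- The (block-diagonal) inverse of `g̃_{ε,δ}`. -/
def gEinv (g ginv : Met n) (ε δ : ℝ) (i j : Fin (n+1)) : Fld n :=
  Fin.cases
    (Fin.cases (fun x t => (Scal g ginv x t + ε / (2 * (t + δ)))⁻¹)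
      (fun _ => fun _ _ => (0:ℝ)) j)
    (fun i' => Fin.cases (fun _ _ => (0:ℝ)) (fun j' => ginv i' j') j) i

/-- The Levi-Civita Christoffel symbols of `g̃_{ε,δ}`:
`Γ̃^k_{ij} = ½ g̃^{kl}(∂ᵢg̃_{jl} + ∂ⱼg̃_{il} − ∂ₗg̃_{ij})`, indices in `0,…,n`. -/
def GammaE (g ginv : Met n) (ε δ : ℝ) : Con n :=
  fun k i j => fun x t => (1/2) * ∑ l : Fin (n+1), gEinv g ginv ε δ k l x t *
    (spdT i (gE g ginv ε δ j l) x t + spdT j (gE g ginv ε δ i l) x t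
      - spdT l (gE g ginv ε δ i j) x t)

end CC

/-! The metric `g̃` is block diagonal, with spatial block `g` and time block
`K = R + ε/(2(t+δ))`, so its Christoffel symbols are read off from the Koszul formula once
the derivatives of the blocks are known: `∂ₜg_{ij} = −2R_{ij}` by the Ricci flow, `∂ᵢK = ∂ᵢR`
and `∂ₜK = ∂ₜR − ε/(2(t+δ)²)`. The last identity needs `R` to be differentiable in time, which
holds because `g`, hence `g⁻¹` (Cramer's rule), hence every curvature quantity is smooth. -/

section MatrixSmoothness

variable {𝕜 E : Type*} [NontriviallyNormedField 𝕜] [NormedAddCommGroup E] [NormedSpace 𝕜 E]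
  {s : Set E} {k : WithTop ℕ∞} {ι : Type*} [Fintype ι] [DecidableEq ι]

theorem contDiffOn_det {M : E → Matrix ι ι 𝕜}
    (hM : ∀ a b, ContDiffOn 𝕜 k (fun p => M p a b) s) :
    ContDiffOn 𝕜 k (fun p => (M p).det) s := by
  simp only [Matrix.det_apply']
  exact ContDiffOn.sum fun σ _ => contDiffOn_const.mul (contDiffOn_prod fun i _ => hM (σ i) i)

/-- Cramer's rule: `H = (det G)⁻¹ • adj G`. -/
theorem contDiffOn_apply_of_mul_eq_one {G H : E → Matrix ι ι 𝕜}
    (hG : ∀ a b, ContDiffOn 𝕜 k (fun p => G p a b) s) (hGH : ∀ p ∈ s, G p * H p = 1)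
    (i j : ι) : ContDiffOn 𝕜 k (fun p => H p i j) s := by
  have hdet_ne : ∀ p ∈ s, (G p).det ≠ 0 := fun p hp =>
    (Matrix.isUnit_det_of_right_inverse (hGH p hp)).ne_zero
  have hadj : ContDiffOn 𝕜 k (fun p => (G p).adjugate i j) s := by
    simp only [Matrix.adjugate_apply]
    refine contDiffOn_det fun a b => ?_
    simp only [Matrix.updateRow_apply]
    split_ifs
    exacts [contDiffOn_const, hG a b]
  refine (((contDiffOn_det hG).inv hdet_ne).mul hadj).congr fun p hp => ?_
  rw [← Matrix.inv_eq_right_inv (hGH p hp), Matrix.inv_def, Matrix.smul_apply,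
    Ring.inverse_eq_inv', smul_eq_mul]
  rfl

end MatrixSmoothness

namespace CC

variable {n : ℕ}

def SmoothOn (U : Set ((Fin n → ℝ) × ℝ)) (u : Fld n) : Prop :=
  ContDiffOn ℝ (⊤ : ℕ∞) (fun p : (Fin n → ℝ) × ℝ => u p.1 p.2) U

theorem spd_eq_fderiv_uncurry {u : Fld n} {p : (Fin n → ℝ) × ℝ}
    (hu : DifferentiableAt ℝ (fun q : (Fin n → ℝ) × ℝ => u q.1 q.2) p) (i : Fin n) :
    spd i u p.1 p.2 =
      fderiv ℝ (fun q : (Fin n → ℝ) × ℝ => u q.1 q.2) p (Pi.single i 1, 0) := by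
  have hslice : HasFDerivAt (fun y : Fin n → ℝ => (y, p.2))
      ((ContinuousLinearMap.id ℝ (Fin n → ℝ)).prod 0) p.1 :=
    (hasFDerivAt_id p.1).prodMk (hasFDerivAt_const p.2 p.1)
  change fderiv ℝ ((fun q : (Fin n → ℝ) × ℝ => u q.1 q.2) ∘ fun y => (y, p.2)) p.1 _ = _
  rw [(hu.hasFDerivAt.comp p.1 hslice).fderiv]
  rfl

variable {U : Set ((Fin n → ℝ) × ℝ)}

theorem SmoothOn.spd (hU : IsOpen U) {u : Fld n} (hu : SmoothOn U u) (i : Fin n) :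
    SmoothOn U (spd i u) :=
  ((hu.fderiv_of_isOpen hU (by simp)).clm_apply contDiffOn_const).congr fun p hp =>
    spd_eq_fderiv_uncurry ((hu.contDiffAt (hU.mem_nhds hp)).differentiableAt (by simp)) i

theorem SmoothOn.differentiableAt_time (hU : IsOpen U) {u : Fld n} (hu : SmoothOn U u)
    {x : Fin n → ℝ} {t : ℝ} (hxt : (x, t) ∈ U) : DifferentiableAt ℝ (fun s => u x s) t :=
  ((hu.contDiffAt (hU.mem_nhds hxt)).differentiableAt (by simp)).comp t
    ((differentiableAt_const x).prodMk differentiableAt_id)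

theorem smoothOn_of_mul_eq_one {g ginv : Met n} (hg : ∀ i j, SmoothOn U (g i j))
    (hinv : ∀ p ∈ U, ∀ i j, ∑ k, g i k p.1 p.2 * ginv k j p.1 p.2 = if i = j then 1 else 0)
    (i j : Fin n) : SmoothOn U (ginv i j) :=
  contDiffOn_apply_of_mul_eq_one
    (G := fun p : (Fin n → ℝ) × ℝ => Matrix.of fun a b => g a b p.1 p.2)
    (H := fun p : (Fin n → ℝ) × ℝ => Matrix.of fun a b => ginv a b p.1 p.2) hg
    (fun p hp => by ext a b; simpa [Matrix.mul_apply, Matrix.one_apply] using hinv p hp a b) i j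

section Curvature

variable {g ginv : Met n} (hU : IsOpen U) (hg : ∀ i j, SmoothOn U (g i j))
  (hginv : ∀ i j, SmoothOn U (ginv i j))
include hU hg hginv

theorem smoothOn_gamma (k i j : Fin n) : SmoothOn U (Gamma g ginv k i j) :=
  contDiffOn_const.mul (ContDiffOn.sum fun l _ => (hginv k l).mul
    ((((hg j l).spd hU i).add ((hg i l).spd hU j)).sub ((hg i j).spd hU l)))

theorem smoothOn_riem (l i j k : Fin n) : SmoothOn U (Riem g ginv l i j k) := by
  have hΓ := smoothOn_gamma hU hg hginv
  exact (((hΓ l j k).spd hU i).sub ((hΓ l i k).spd hU j)).add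
    (ContDiffOn.sum fun m _ => ((hΓ m j k).mul (hΓ l i m)).sub ((hΓ m i k).mul (hΓ l j m)))

theorem smoothOn_scal : SmoothOn U (Scal g ginv) :=
  ContDiffOn.sum fun j _ => ContDiffOn.sum fun k _ => (hginv j k).mul
    (ContDiffOn.sum fun p _ => smoothOn_riem hU hg hginv p p j k)

end Curvature

theorem RicciFlow.differentiableAt_scal {Ω : Set (Fin n → ℝ)} {T : ℝ} {g ginv : Met n}
    (hg : RicciFlow Ω T g ginv) {x : Fin n → ℝ} (hx : x ∈ Ω) {t : ℝ}
    (ht : t ∈ Set.Ioo 0 T) :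
    DifferentiableAt ℝ (fun s => Scal g ginv x s) t := by
  obtain ⟨hΩ, -, -, hsmooth, hpt⟩ := hg
  have hU : IsOpen (Ω ×ˢ Set.Ioo 0 T) := hΩ.prod isOpen_Ioo
  have hsub : Ω ×ˢ Set.Ioo 0 T ⊆ Ω ×ˢ Set.Ico 0 T :=
    Set.prod_mono_right Set.Ioo_subset_Ico_self
  have hg : ∀ i j, SmoothOn (Ω ×ˢ Set.Ioo 0 T) (g i j) := fun i j => (hsmooth i j).mono hsub
  have hginv := smoothOn_of_mul_eq_one hg fun p hp => (hpt p.1 hp.1 p.2 (hsub hp).2).2.2.1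
  exact (smoothOn_scal hU hg hginv).differentiableAt_time hU ⟨hx, ht⟩

section BlockDiagonal

variable (g ginv : Met n) (ε δ : ℝ) (x : Fin n → ℝ) (t : ℝ)

@[simp] theorem spd_zero (i : Fin n) : spd i (fun _ _ => (0 : ℝ)) = fun _ _ => 0 := by
  funext y s; simp [spd]

@[simp] theorem tpd_zero : tpd (fun (_ : Fin n → ℝ) (_ : ℝ) => (0 : ℝ)) = fun _ _ => 0 := by
  funext y s; simp [tpd]

theorem gE_zero_zero : gE g ginv ε δ 0 0 x t = Scal g ginv x t + ε / (2 * (t + δ)) := rfl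

theorem GammaE_succ_succ_succ (k i j : Fin n) :
    GammaE g ginv ε δ k.succ i.succ j.succ x t = Gamma g ginv k i j x t := by
  simp [GammaE, gEinv, gE, spdT, Fin.sum_univ_succ, Gamma]

theorem GammaE_zero_succ_succ (i j : Fin n) :
    GammaE g ginv ε δ 0 i.succ j.succ x t =
      -(1/2) * (gE g ginv ε δ 0 0 x t)⁻¹ * tpd (g i j) x t := by
  simp only [GammaE, gEinv, gE, spdT, Fin.cases_zero, Fin.cases_succ, Fin.sum_univ_succ,
    spd_zero, add_zero, zero_sub, zero_mul, Finset.sum_const_zero]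
  ring

theorem GammaE_succ_succ_zero (k i : Fin n) :
    GammaE g ginv ε δ k.succ i.succ 0 x t = (1/2) * ∑ l, ginv k l x t * tpd (g i l) x t := by
  simp [GammaE, gEinv, gE, spdT, Fin.sum_univ_succ]

theorem GammaE_succ_zero_succ (k i : Fin n) :
    GammaE g ginv ε δ k.succ 0 i.succ x t = (1/2) * ∑ l, ginv k l x t * tpd (g i l) x t := by
  simp [GammaE, gEinv, gE, spdT, Fin.sum_univ_succ]

theorem GammaE_succ_zero_zero (k : Fin n) :
    GammaE g ginv ε δ k.succ 0 0 x t =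
      -(1/2) * ∑ l, ginv k l x t * spd l (gE g ginv ε δ 0 0) x t := by
  simp [GammaE, gEinv, gE, spdT, Fin.sum_univ_succ]

theorem GammaE_zero_succ_zero (i : Fin n) :
    GammaE g ginv ε δ 0 i.succ 0 x t =
      (1/2) * (gE g ginv ε δ 0 0 x t)⁻¹ * spd i (gE g ginv ε δ 0 0) x t := by
  simp only [GammaE, gEinv, gE, spdT, Fin.cases_zero, Fin.cases_succ, Fin.sum_univ_succ,
    tpd_zero, spd_zero, add_zero, sub_zero, zero_add, zero_mul, Finset.sum_const_zero]
  ring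

theorem GammaE_zero_zero_succ (i : Fin n) :
    GammaE g ginv ε δ 0 0 i.succ x t =
      (1/2) * (gE g ginv ε δ 0 0 x t)⁻¹ * spd i (gE g ginv ε δ 0 0) x t := by
  simp only [GammaE, gEinv, gE, spdT, Fin.cases_zero, Fin.cases_succ, Fin.sum_univ_succ,
    tpd_zero, spd_zero, add_zero, sub_zero, zero_add, zero_mul, Finset.sum_const_zero]
  ring

theorem GammaE_zero_zero_zero :
    GammaE g ginv ε δ 0 0 0 x t =
      (1/2) * (gE g ginv ε δ 0 0 x t)⁻¹ * tpd (gE g ginv ε δ 0 0) x t := by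
  simp only [GammaE, gEinv, gE, spdT, Fin.cases_zero, Fin.cases_succ, Fin.sum_univ_succ,
    add_sub_cancel_right, tpd_zero, add_zero, zero_mul, Finset.sum_const_zero]
  ring

theorem spd_gE_zero_zero (i : Fin n) : spd i (gE g ginv ε δ 0 0) = spd i (Scal g ginv) := by
  funext y s
  change fderiv ℝ (fun z => Scal g ginv z s + ε / (2 * (s + δ))) y (Pi.single i 1) =
    fderiv ℝ (fun z => Scal g ginv z s) y (Pi.single i 1)
  rw [fderiv_add_const]

end BlockDiagonal

theorem tpd_gE_zero_zero (g ginv : Met n) (ε δ : ℝ) {x : Fin n → ℝ} {t : ℝ}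
    (hR : DifferentiableAt ℝ (fun s => Scal g ginv x s) t) (ht : t + δ ≠ 0) :
    tpd (gE g ginv ε δ 0 0) x t = tpd (Scal g ginv) x t - ε / (2 * (t + δ) ^ 2) := by
  have hc : HasDerivAt (fun s => ε / (2 * (s + δ))) (-(ε / (2 * (t + δ) ^ 2))) t := by
    refine ((hasDerivAt_const t ε).fun_div (((hasDerivAt_id' t).add_const δ).const_mul 2)
      (mul_ne_zero two_ne_zero ht)).congr_deriv ?_
    field_simp
    ring
  change deriv (fun s => Scal g ginv x s + ε / (2 * (s + δ))) t = _
  rw [deriv_fun_add hR hc.differentiableAt, hc.deriv, sub_eq_add_neg]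
  rfl

end CC

theorem approx_christoffel_general (n : ℕ)
    (Ωs : Set (Fin n → ℝ)) (T : ℝ)
    (g ginv : CC.Met n) (hg : CC.RicciFlow Ωs T g ginv)
    (ε δ : ℝ) (hδ : 0 < δ) :
    ∀ x ∈ Ωs, ∀ t ∈ Set.Ioo (0:ℝ) T,
      0 < CC.Scal g ginv x t + ε / (2 * (t + δ)) →
      -- (1)
      (∀ i j k : Fin n,
        CC.GammaE g ginv ε δ k.succ i.succ j.succ x t = CC.Gamma g ginv k i j x t) ∧
      -- (2)
      (∀ i j : Fin n,
        CC.GammaE g ginv ε δ 0 i.succ j.succ x t =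
          CC.Ric g ginv i j x t / (CC.Scal g ginv x t + ε / (2 * (t + δ)))) ∧
      -- (3)
      (∀ i k : Fin n,
        CC.GammaE g ginv ε δ k.succ i.succ 0 x t = -(CC.RicUp g ginv k i x t) ∧
        CC.GammaE g ginv ε δ k.succ 0 i.succ x t = -(CC.RicUp g ginv k i x t)) ∧
      -- (4)
      (∀ k : Fin n,
        CC.GammaE g ginv ε δ k.succ 0 0 x t = -(1/2) * CC.gradScal g ginv k x t) ∧
      -- (5)
      (∀ i : Fin n,
        CC.GammaE g ginv ε δ 0 i.succ 0 x t =
          CC.spd i (CC.Scal g ginv) x t / (2 * (CC.Scal g ginv x t + ε / (2 * (t + δ)))) ∧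
        CC.GammaE g ginv ε δ 0 0 i.succ x t =
          CC.spd i (CC.Scal g ginv) x t / (2 * (CC.Scal g ginv x t + ε / (2 * (t + δ))))) ∧
      -- (6)
      (CC.GammaE g ginv ε δ 0 0 0 x t =
        ((1/2) * CC.tpd (CC.Scal g ginv) x t - ε / (4 * (t + δ)^2))
          / (CC.Scal g ginv x t + ε / (2 * (t + δ)))) := by
  intro x hx t ht _
  -- fold `K` into the atom `g̃₀₀ x t`, so that `ring` sees `(2K)⁻¹ = ½ K⁻¹`
  simp only [← CC.gE_zero_zero g ginv ε δ x t]
  have hK : CC.tpd (CC.gE g ginv ε δ 0 0) x t =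
      CC.tpd (CC.Scal g ginv) x t - ε / (2 * (t + δ) ^ 2) :=
    CC.tpd_gE_zero_zero g ginv ε δ (hg.differentiableAt_scal hx ht) (by linarith [ht.1])
  obtain ⟨-, -, -, -, hpt⟩ := hg
  obtain ⟨-, -, -, hflow⟩ := hpt x hx t (Set.Ioo_subset_Ico_self ht)
  have hRicUp : ∀ i k,
      (1/2) * ∑ l, ginv k l x t * CC.tpd (g i l) x t = -CC.RicUp g ginv k i x t := by
    intro i k
    simp only [CC.RicUp, hflow, Finset.mul_sum, ← Finset.sum_neg_distrib]
    exact Finset.sum_congr rfl fun l _ => by ring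
  refine ⟨fun i j k => CC.GammaE_succ_succ_succ g ginv ε δ x t k i j, fun i j => ?_,
    fun i k => ⟨?_, ?_⟩, fun k => ?_, fun i => ⟨?_, ?_⟩, ?_⟩
  · rw [CC.GammaE_zero_succ_succ, hflow]; ring
  · rw [CC.GammaE_succ_succ_zero, hRicUp]
  · rw [CC.GammaE_succ_zero_succ, hRicUp]
  · simp only [CC.GammaE_succ_zero_zero, CC.spd_gE_zero_zero]; rfl
  · rw [CC.GammaE_zero_succ_zero, CC.spd_gE_zero_zero]; ring
  · rw [CC.GammaE_zero_zero_succ, CC.spd_gE_zero_zero]; ring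
  · rw [CC.GammaE_zero_zero_zero, hK]
    generalize t + δ = τ
    ring

/-- Lemma 4.3 of Chow–Chu. The Levi-Civita Christoffel
symbols of the space-time metric `g̃_{ε,δ}`, at points where
`K = R + ε/(2(t+δ)) > 0`. -/
theorem approx_christoffel (n : ℕ) (hn : 2 ≤ n)
    (Ωs : Set (Fin n → ℝ)) (T : ℝ)
    (g ginv : CC.Met n) (hg : CC.RicciFlow Ωs T g ginv)
    (ε δ : ℝ) (hε : 0 < ε) (hδ : 0 < δ) :
    ∀ x ∈ Ωs, ∀ t ∈ Set.Ioo (0:ℝ) T,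
      0 < CC.Scal g ginv x t + ε / (2 * (t + δ)) →
      -- (1)
      (∀ i j k : Fin n,
        CC.GammaE g ginv ε δ k.succ i.succ j.succ x t = CC.Gamma g ginv k i j x t) ∧
      -- (2)
      (∀ i j : Fin n,
        CC.GammaE g ginv ε δ 0 i.succ j.succ x t =
          CC.Ric g ginv i j x t / (CC.Scal g ginv x t + ε / (2 * (t + δ)))) ∧
      -- (3)
      (∀ i k : Fin n,
        CC.GammaE g ginv ε δ k.succ i.succ 0 x t = -(CC.RicUp g ginv k i x t) ∧
        CC.GammaE g ginv ε δ k.succ 0 i.succ x t = -(CC.RicUp g ginv k i x t)) ∧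
      -- (4)
      (∀ k : Fin n,
        CC.GammaE g ginv ε δ k.succ 0 0 x t = -(1/2) * CC.gradScal g ginv k x t) ∧
      -- (5)
      (∀ i : Fin n,
        CC.GammaE g ginv ε δ 0 i.succ 0 x t =
          CC.spd i (CC.Scal g ginv) x t / (2 * (CC.Scal g ginv x t + ε / (2 * (t + δ)))) ∧
        CC.GammaE g ginv ε δ 0 0 i.succ x t =
          CC.spd i (CC.Scal g ginv) x t / (2 * (CC.Scal g ginv x t + ε / (2 * (t + δ))))) ∧
      -- (6)
      (CC.GammaE g ginv ε δ 0 0 0 x t =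
        ((1/2) * CC.tpd (CC.Scal g ginv) x t - ε / (4 * (t + δ)^2))
          / (CC.Scal g ginv x t + ε / (2 * (t + δ)))) :=
  approx_christoffel_general n Ωs T g ginv hg ε δ hδ
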